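/- The map sending a non-trivial signed elementary product of a k×k lower Hessenberg matrix (equivalently, a permutation σ ∈ S_k with σ(i) ≤ i+1 for all i) to the 0-1 array (r_1,...,r_k) where r_i = 0 if σ(i) = i+1 and r_i = 1 otherwise is a bijection onto the set of 0-1 arrays of length k whose last component is 1. -/

import Mathlib

private def st (r : ℕ → ℕ) : ℕ → ℕ
  | 0 => 0
  | i + 1 => if r i = 0 then st r i else i + 1

private lemma st_le (r : ℕ → ℕ) : ∀ i, st r i ≤ i
  | 0 => le_refl 0
  | i + 1 => by
    unfold st
    split
    · exact (st_le r i).trans (Nat.le_succ i)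
    · exact le_refl _

private lemma st_pred (r : ℕ → ℕ) : ∀ i, 0 < st r i → r (st r i - 1) ≠ 0
  | 0 => by simp [st]
  | i + 1 => by
    unfold st
    split
    · exact st_pred r i
    · intro _
      simpa using ‹¬ r i = 0›

private lemma st_zeros (r : ℕ → ℕ) : ∀ i, ∀ m, st r i ≤ m → m < i → r m = 0
  | 0, m, _, h => absurd h (Nat.not_lt_zero m)
  | i + 1, m, h1, h2 => by
    unfold st at h1
    split at h1
    · rcases Nat.lt_succ_iff_lt_or_eq.mp h2 with h | h
      · exact st_zeros r i m h1 h
      · subst h; assumption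
    · omega

private lemma key {k : ℕ} (σ : Equiv.Perm (Fin k))
    (hσ : ∀ i : Fin k, (σ i : ℕ) ≤ (i : ℕ) + 1)
    (r : ℕ → ℕ)
    (hr : ∀ (n : ℕ) (h : n < k), (r n = 0 ↔ (σ ⟨n, h⟩ : ℕ) = n + 1))
    (i : Fin k) (hne : (σ i : ℕ) ≠ (i : ℕ) + 1) :
    (σ i : ℕ) = st r i := by
  set s := st r i with hs
  have hsle : s ≤ (i : ℕ) := st_le r i
  have hile : (σ i : ℕ) ≤ (i : ℕ) := by have := hσ i; omega
  by_cases hgt : s < (σ i : ℕ)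
  · exfalso
    set t := (σ i : ℕ) with ht'
    have ht : t - 1 < (i : ℕ) := by omega
    have hm : r (t - 1) = 0 := st_zeros r i (t - 1) (by omega) (by omega)
    have h2 : (σ ⟨t - 1, by omega⟩ : ℕ) = t := by
      have := (hr (t - 1) (by omega)).mp hm
      omega
    have heq : σ ⟨t - 1, by omega⟩ = σ i := Fin.ext (by rw [h2])
    have h3 := σ.injective heq
    have h4 : t - 1 = (i : ℕ) := congrArg Fin.val h3
    omega
  by_cases hlt : (σ i : ℕ) < s
  · exfalso
    have hs0 : 0 < s := by omega
    have hpred := st_pred r i hs0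
    have hmaps : Set.MapsTo σ {m : Fin k | (m : ℕ) < s} {m : Fin k | (m : ℕ) < s} := by
      intro m hm
      simp only [Set.mem_setOf_eq] at *
      have h1 : (σ m : ℕ) ≤ (m : ℕ) + 1 := hσ m
      by_contra hc
      have hms : (σ m : ℕ) = s := by omega
      have hm1 : (m : ℕ) = s - 1 := by omega
      have h2 : r ((m : ℕ)) = 0 := by
        refine (hr (m : ℕ) m.isLt).mpr ?_
        have : (⟨(m : ℕ), m.isLt⟩ : Fin k) = m := rfl
        rw [this]
        omega
      rw [hm1] at h2
      exact hpred h2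
    have hfin : ({m : Fin k | (m : ℕ) < s}).Finite := Set.toFinite _
    have hbij := (hfin.injOn_iff_bijOn_of_mapsTo hmaps).mp (σ.injective.injOn)
    have hsurj := hbij.surjOn
    have hmem : σ i ∈ {m : Fin k | (m : ℕ) < s} := hlt
    obtain ⟨m, hmA, hme⟩ := hsurj hmem
    have := σ.injective hme
    subst this
    simp only [Set.mem_setOf_eq] at hmA
    omega
  omega

/-- The map sending a permutation `σ ∈ S_k` with `σ(i) ≤ i + 1` for all `i` (indexing a
non-trivial signed elementary product of a `k × k` lower Hessenberg matrix) to the 0-1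
array `r` with `r i = 0` if `σ(i) = i + 1` and `r i = 1` otherwise, is a bijection onto
the set of 0-1 arrays of length `k` whose last component is `1`. -/
theorem stmt3 (k : ℕ) (hk : 1 ≤ k) :
    Set.BijOn
      (fun σ : Equiv.Perm (Fin k) =>
        fun i : Fin k => if (σ i : ℕ) = (i : ℕ) + 1 then (0 : ℕ) else 1)
      {σ : Equiv.Perm (Fin k) | ∀ i : Fin k, (σ i : ℕ) ≤ (i : ℕ) + 1}
      {r : Fin k → ℕ | (∀ i, r i = 0 ∨ r i = 1) ∧ r ⟨k - 1, by omega⟩ = 1} := by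
  refine ⟨?_, ?_, ?_⟩
  · -- MapsTo
    intro σ hσ
    refine ⟨fun i => ?_, ?_⟩
    · by_cases h : (σ i : ℕ) = (i : ℕ) + 1 <;> simp [h]
    · have hlt : (σ ⟨k - 1, by omega⟩ : ℕ) < k := (σ _).isLt
      simp only []
      rw [if_neg]
      omega
  · -- InjOn
    intro σ hσ τ hτ heq
    simp only [Set.mem_setOf_eq] at hσ hτ
    have hiff : ∀ i : Fin k, ((σ i : ℕ) = (i : ℕ) + 1 ↔ (τ i : ℕ) = (i : ℕ) + 1) := by
      intro i
      have := congrFun heq i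
      by_cases h1 : (σ i : ℕ) = (i : ℕ) + 1 <;> by_cases h2 : (τ i : ℕ) = (i : ℕ) + 1 <;>
        simp [h1, h2] at this ⊢
    set r : ℕ → ℕ := fun n => if h : n < k then (if (σ ⟨n, h⟩ : ℕ) = n + 1 then 0 else 1) else 1
      with hrdef
    have hrσ : ∀ (n : ℕ) (h : n < k), (r n = 0 ↔ (σ ⟨n, h⟩ : ℕ) = n + 1) := by
      intro n h
      simp only [hrdef, dif_pos h]
      split <;> simp_all
    have hrτ : ∀ (n : ℕ) (h : n < k), (r n = 0 ↔ (τ ⟨n, h⟩ : ℕ) = n + 1) := by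
      intro n h
      rw [hrσ n h]
      exact hiff ⟨n, h⟩
    ext i
    by_cases h : (σ i : ℕ) = (i : ℕ) + 1
    · rw [h, ((hiff i).mp h).symm]
    · have h2 : ¬ (τ i : ℕ) = (i : ℕ) + 1 := fun hc => h ((hiff i).mpr hc)
      rw [key σ hσ r hrσ i h, key τ hτ r hrτ i h2]
  · -- SurjOn
    intro r hr
    obtain ⟨h01, hlast⟩ := hr
    set R : ℕ → ℕ := fun n => if h : n < k then r ⟨n, h⟩ else 1 with hRdef
    have hRval : ∀ i : Fin k, R (i : ℕ) = r i := by
      intro i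
      simp only [hRdef, dif_pos i.isLt]
    have hfval : ∀ i : Fin k, R (i : ℕ) = 0 → (i : ℕ) + 1 < k := by
      intro i h
      rw [hRval] at h
      by_contra hc
      have hik : (i : ℕ) < k := i.isLt
      have : i = ⟨k - 1, by omega⟩ := Fin.ext (by show (i:ℕ) = k - 1; omega)
      rw [this, hlast] at h
      exact one_ne_zero h
    set f : Fin k → Fin k := fun i =>
      if h : R (i : ℕ) = 0 then ⟨(i : ℕ) + 1, hfval i h⟩
      else ⟨st R (i : ℕ), lt_of_le_of_lt (st_le R (i : ℕ)) i.isLt⟩ with hfdef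
    have hfval0 : ∀ i : Fin k, R (i : ℕ) = 0 → (f i : ℕ) = (i : ℕ) + 1 := by
      intro i h; simp only [hfdef, dif_pos h]
    have hfval1 : ∀ i : Fin k, R (i : ℕ) ≠ 0 → (f i : ℕ) = st R (i : ℕ) := by
      intro i h; simp only [hfdef, dif_neg h]
    have hinj : Function.Injective f := by
      intro i j hij
      have hv : (f i : ℕ) = (f j : ℕ) := congrArg Fin.val hij
      by_cases hi : R (i : ℕ) = 0 <;> by_cases hj : R (j : ℕ) = 0
      · rw [hfval0 i hi, hfval0 j hj] at hv
        exact Fin.ext (by omega)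
      · exfalso
        rw [hfval0 i hi, hfval1 j hj] at hv
        have h1 : st R (j : ℕ) ≤ (j : ℕ) := st_le R (j : ℕ)
        have h0 : 0 < st R (j : ℕ) := by omega
        have := st_pred R (j : ℕ) h0
        rw [← hv] at this
        simp only [Nat.add_sub_cancel] at this
        exact this hi
      · exfalso
        rw [hfval1 i hi, hfval0 j hj] at hv
        have h1 : st R (i : ℕ) ≤ (i : ℕ) := st_le R (i : ℕ)
        have h0 : 0 < st R (i : ℕ) := by omega
        have := st_pred R (i : ℕ) h0
        rw [hv] at this
        simp only [Nat.add_sub_cancel] at this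
        exact this hj
      · rw [hfval1 i hi, hfval1 j hj] at hv
        refine Fin.ext ?_
        by_contra hc
        rcases Nat.lt_or_ge (i : ℕ) (j : ℕ) with h | h
        · have h1 : st R (i : ℕ) ≤ (i : ℕ) := st_le R (i : ℕ)
          have : R (i : ℕ) = 0 := st_zeros R (j : ℕ) (i : ℕ) (by omega) h
          exact hi this
        · have hlt : (j : ℕ) < (i : ℕ) := by omega
          have h1 : st R (j : ℕ) ≤ (j : ℕ) := st_le R (j : ℕ)
          have : R (j : ℕ) = 0 := st_zeros R (i : ℕ) (j : ℕ) (by omega) hlt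
          exact hj this
    have hbij : Function.Bijective f := Finite.injective_iff_bijective.mp hinj
    refine ⟨Equiv.ofBijective f hbij, ?_, ?_⟩
    · intro i
      simp only [Equiv.ofBijective_apply]
      by_cases h : R (i : ℕ) = 0
      · rw [hfval0 i h]
      · rw [hfval1 i h]
        have := st_le R (i : ℕ)
        omega
    · funext i
      simp only [Equiv.ofBijective_apply]
      rcases h01 i with h | h
      · rw [if_pos (by rw [hfval0 i (by rw [hRval]; exact h)]), h]
      · rw [if_neg, h]
        have hR1 : R (i : ℕ) ≠ 0 := by rw [hRval, h]; exact one_ne_zero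
        rw [hfval1 i hR1]
        have := st_le R (i : ℕ)
        omega
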